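/- Let V be a finite-dimensional real vector space with a non-degenerate skew-symmetric bilinear form E, let J : V → V be a linear map with J² = -1 satisfying E(uJ, vJ) = E(u,v) for all u,v and E(vJ, v) > 0 for all v ≠ 0. If U ⊆ V is an isotropic subspace for E, then V = UJ ⊕ U^⊥, where U^⊥ is the E-orthogonal complement of U. -/

import Mathlib

/-! Compatibility gives `E(u, Ju) = E(Ju, J²u) = -E(Ju, u)`, which is negative for `u ≠ 0`, so
no nonzero `Ju` with `u ∈ U` is `E`-orthogonal to `U`: `J(U) ∩ U^⊥ = 0`.
Since `J` is injective and `dim U + dim U^⊥ ≥ dim V` for any bilinear form, the two subspaces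
are complementary. -/

open Module

namespace LinearMap.BilinForm

variable {K V : Type*} [Field K] [AddCommGroup V] [Module K V] [FiniteDimensional K V]

theorem finrank_le_finrank_add_finrank_orthogonal (B : LinearMap.BilinForm K V)
    (W : Submodule K V) :
    finrank K V ≤ finrank K W + finrank K (B.orthogonal W) := by
  rw [finrank_add_finrank_orthogonal']
  exact Nat.le_add_right _ _

theorem isCompl_map_orthogonal_of_disjoint (B : LinearMap.BilinForm K V) {f : V →ₗ[K] V}
    (hf : Function.Injective f) (W : Submodule K V)
    (hdisj : Disjoint (W.map f) (B.orthogonal W)) : IsCompl (W.map f) (B.orthogonal W) := by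
  refine (Submodule.isCompl_iff_disjoint _ _ ?_).mpr hdisj
  rw [← (Submodule.equivMapOfInjective f hf W).finrank_eq]
  exact B.finrank_le_finrank_add_finrank_orthogonal W

end LinearMap.BilinForm

theorem stmt0_general {V : Type*} [AddCommGroup V] [Module ℝ V] [FiniteDimensional ℝ V]
    (E : LinearMap.BilinForm ℝ V)
    (J : V →ₗ[ℝ] V) (hJ : ∀ v, J (J v) = -v)
    (hEJ : ∀ u v, E (J u) (J v) = E u v)
    (hpos : ∀ v, v ≠ 0 → 0 < E (J v) v)
    (U : Submodule ℝ V) :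
    IsCompl (U.map J) (LinearMap.BilinForm.orthogonal E U) := by
  have hJinj : Function.Injective J := by
    refine (injective_iff_map_eq_zero J).mpr fun v hv => ?_
    simpa [hv] using hJ v
  refine E.isCompl_map_orthogonal_of_disjoint hJinj U ?_
  rw [Submodule.disjoint_def]
  rintro _ ⟨u, hu, rfl⟩ horth
  suffices u = 0 by rw [this, map_zero]
  by_contra hu0
  have hortho : E u (J u) = 0 := horth u hu
  have hskew : E u (J u) = -E (J u) u := by
    rw [← hEJ u (J u), hJ, map_neg]
  linarith [hpos u hu0]

/-- If `(V, E)` is a finite-dimensional real symplectic vector space,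
`J` is a complex structure compatible with `E` (i.e. `E(J·, J·) = E(·,·)` and
`E(Jv, v) > 0` for `v ≠ 0`), and `U` is an `E`-isotropic subspace, then
`V = J(U) ⊕ U^⊥`, where `U^⊥` is the `E`-orthogonal complement of `U`. -/
theorem stmt0 {V : Type*} [AddCommGroup V] [Module ℝ V] [FiniteDimensional ℝ V]
    (E : LinearMap.BilinForm ℝ V)
    (halt : ∀ v, E v v = 0)
    (hnd : ∀ v, (∀ w, E v w = 0) → v = 0)
    (J : V →ₗ[ℝ] V) (hJ : ∀ v, J (J v) = -v)
    (hEJ : ∀ u v, E (J u) (J v) = E u v)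
    (hpos : ∀ v, v ≠ 0 → 0 < E (J v) v)
    (U : Submodule ℝ V) (hiso : ∀ u ∈ U, ∀ u' ∈ U, E u u' = 0) :
    IsCompl (U.map J) (LinearMap.BilinForm.orthogonal E U) :=
  stmt0_general E J hJ hEJ hpos U
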